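/- arXiv:2107.09459 — 2 statements merged into one kernel-verified Lean document; each statement's English description precedes it below -/
import Mathlib

section
/- Let K be a nonnegative n×n matrix, α ∈ [0,1], and define ρ_j = r(S_α(K^{2^j}))^{2^{-j}} for j ≥ 0. Then the sequence ρ_j is nondecreasing and bounded above by r(K): r(S_α(K)) = ρ₀ ≤ ρ₁ ≤ ⋯ ≤ ρ_j ≤ r(K) for every j. -/
open scoped ENNReal
open Finset
noncomputable def specRad {n : ℕ} (A : Matrix (Fin n) (Fin n) ℝ) : ℝ≥0∞ :=
  spectralRadius ℂ (A.map (algebraMap ℝ ℂ))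
noncomputable def opNorm {n : ℕ} (A : Matrix (Fin n) (Fin n) ℝ) : ℝ :=
  ‖Matrix.toEuclideanCLM (𝕜 := ℝ) A‖

/-!
Hölder's inequality gives `S_α(A) S_α(B) ≤ S_α(AB)` entrywise for commuting nonnegative `A`, `B`
(commutativity turns `(BA)ᵀ` into `(AB)ᵀ`), hence `S_α(A)^m ≤ S_α(A^m)`. The spectral radius is
monotone on nonnegative matrices and `r(B^k) = r(B)^k`, so `r(S_α(A))^2 ≤ r(S_α(A^2))`; with
`A = K^(2^j)` this is `ρ_j ≤ ρ_(j+1)`. Weighted AM-GM bounds `S_α(P)` by `α P + (1 - α) Pᵀ`, so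
the Frobenius norm of `S_α(P)` is at most that of `P`; then `‖S_α(A)^m‖ ≤ ‖A^m‖` for all `m`, and
Gelfand's formula gives `r(S_α(A)) ≤ r(A)`, i.e. `ρ_j ≤ r(K)` for `A = K^(2^j)`.
-/

theorem spectrum.spectralRadius_pow {𝕜 A : Type*} [NormedField 𝕜] [IsAlgClosed 𝕜] [Ring A]
    [Algebra 𝕜 A] (a : A) {k : ℕ} (hk : k ≠ 0) :
    spectralRadius 𝕜 (a ^ k) = spectralRadius 𝕜 a ^ k := by
  refine le_antisymm ?_ (spectralRadius_pow_le a k hk)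
  rw [spectralRadius, spectrum.map_pow_of_pos a (Nat.pos_of_ne_zero hk), spectralRadius,
    ENNReal.iSup₂_pow_of_ne_zero _ hk]
  refine iSup₂_le fun z hz => ?_
  obtain ⟨x, hx, rfl⟩ := hz
  exact le_iSup₂_of_le x hx (by simp)

theorem spectrum.spectralRadius_le_of_forall_norm_pow_le {A : Type*} [NormedRing A]
    [NormedAlgebra ℂ A] [CompleteSpace A] {a b : A} (h : ∀ m : ℕ, ‖a ^ m‖ ≤ ‖b ^ m‖) :
    spectralRadius ℂ a ≤ spectralRadius ℂ b :=
  le_of_tendsto_of_tendsto' (pow_norm_pow_one_div_tendsto_nhds_spectralRadius a)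
    (pow_norm_pow_one_div_tendsto_nhds_spectralRadius b) fun m =>
      ENNReal.ofReal_le_ofReal <| by gcongr; exact h m

theorem Real.sum_rpow_mul_rpow_one_sub_le {ι : Type*} (s : Finset ι) {f g : ι → ℝ}
    (hf : ∀ i ∈ s, 0 ≤ f i) (hg : ∀ i ∈ s, 0 ≤ g i) {α : ℝ} (h0 : 0 ≤ α) (h1 : α ≤ 1) :
    ∑ i ∈ s, f i ^ α * g i ^ (1 - α) ≤ (∑ i ∈ s, f i) ^ α * (∑ i ∈ s, g i) ^ (1 - α) := by
  rcases h0.eq_or_lt with rfl | h0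
  · simp
  rcases h1.eq_or_lt with rfl | h1
  · simp
  have hpow : ∀ {x : ℝ} {β : ℝ}, 0 ≤ x → β ≠ 0 → (x ^ β) ^ β⁻¹ = x := fun hx hβ => by
    rw [← Real.rpow_mul hx, mul_inv_cancel₀ hβ, Real.rpow_one]
  have := Real.inner_le_Lp_mul_Lq_of_nonneg s (Real.HolderConjugate.inv_one_sub_inv h0 h1)
    (f := fun i => f i ^ α) (g := fun i => g i ^ (1 - α))
    (fun i hi => Real.rpow_nonneg (hf i hi) _) (fun i hi => Real.rpow_nonneg (hg i hi) _)
  simpa [Finset.sum_congr rfl fun i hi => hpow (hf i hi) h0.ne',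
    Finset.sum_congr rfl fun i hi => hpow (hg i hi) (sub_pos.2 h1).ne'] using this

namespace Matrix

variable {ι : Type*}

/-- The paper's `S_α(A)`: the entrywise weighted geometric mean of `A` and `Aᵀ`. -/
noncomputable def geomMeanTranspose (α : ℝ) (A : Matrix ι ι ℝ) : Matrix ι ι ℝ :=
  of fun i j => A i j ^ α * A j i ^ (1 - α)

theorem geomMeanTranspose_apply_nonneg (α : ℝ) {A : Matrix ι ι ℝ} (hA : ∀ i j, 0 ≤ A i j)
    (i j : ι) : 0 ≤ geomMeanTranspose α A i j :=
  mul_nonneg (Real.rpow_nonneg (hA i j) _) (Real.rpow_nonneg (hA j i) _)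

theorem one_apply_le_geomMeanTranspose_one [DecidableEq ι] (α : ℝ) (i j : ι) :
    (1 : Matrix ι ι ℝ) i j ≤ geomMeanTranspose α 1 i j := by
  by_cases h : i = j
  · subst h; simp [geomMeanTranspose]
  · rw [one_apply_ne h]
    exact geomMeanTranspose_apply_nonneg α
      (fun _ _ => by rw [one_apply]; split_ifs <;> norm_num) i j

variable [Fintype ι]

theorem mul_apply_le_mul_apply {A A' B B' : Matrix ι ι ℝ} (hA : ∀ i j, 0 ≤ A i j)
    (hB : ∀ i j, 0 ≤ B i j) (hAA' : ∀ i j, A i j ≤ A' i j) (hBB' : ∀ i j, B i j ≤ B' i j)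
    (i j : ι) : (A * B) i j ≤ (A' * B') i j :=
  Finset.sum_le_sum fun k _ =>
    mul_le_mul (hAA' i k) (hBB' k j) (hB k j) ((hA i k).trans (hAA' i k))

theorem geomMeanTranspose_mul_apply_le {A B : Matrix ι ι ℝ} (hA : ∀ i j, 0 ≤ A i j)
    (hB : ∀ i j, 0 ≤ B i j) (hAB : Commute A B) {α : ℝ} (h0 : 0 ≤ α) (h1 : α ≤ 1) (i j : ι) :
    (geomMeanTranspose α A * geomMeanTranspose α B) i j ≤ geomMeanTranspose α (A * B) i j := by
  calc (geomMeanTranspose α A * geomMeanTranspose α B) i j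
      = ∑ k, (A i k * B k j) ^ α * (B j k * A k i) ^ (1 - α) := by
        refine Finset.sum_congr rfl fun k _ => ?_
        simp only [geomMeanTranspose, of_apply]
        rw [Real.mul_rpow (hA i k) (hB k j), Real.mul_rpow (hB j k) (hA k i)]
        ring
    _ ≤ (∑ k, A i k * B k j) ^ α * (∑ k, B j k * A k i) ^ (1 - α) :=
        Real.sum_rpow_mul_rpow_one_sub_le _ (fun k _ => mul_nonneg (hA i k) (hB k j))
          (fun k _ => mul_nonneg (hB j k) (hA k i)) h0 h1
    _ = geomMeanTranspose α (A * B) i j := by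
        rw [← mul_apply, ← mul_apply, ← hAB.eq]; rfl

section Frobenius

attribute [local instance] frobeniusSeminormedAddCommGroup frobeniusNormedAddCommGroup
  frobeniusNormedSpace

theorem frobenius_norm_le_of_apply_le {m n : Type*} [Fintype m] [Fintype n]
    {B C : Matrix m n ℝ} (hB : ∀ i j, 0 ≤ B i j) (hBC : ∀ i j, B i j ≤ C i j) : ‖B‖ ≤ ‖C‖ := by
  rw [frobenius_norm_def, frobenius_norm_def]
  gcongr with i _ j _
  rw [Real.norm_of_nonneg (hB i j), Real.norm_of_nonneg ((hB i j).trans (hBC i j))]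
  exact hBC i j

theorem frobenius_norm_geomMeanTranspose_le {P : Matrix ι ι ℝ} (hP : ∀ i j, 0 ≤ P i j) {α : ℝ}
    (h0 : 0 ≤ α) (h1 : α ≤ 1) : ‖geomMeanTranspose α P‖ ≤ ‖P‖ := by
  have h1' : 0 ≤ 1 - α := sub_nonneg.2 h1
  calc ‖geomMeanTranspose α P‖ ≤ ‖α • P + (1 - α) • Pᵀ‖ :=
        frobenius_norm_le_of_apply_le (geomMeanTranspose_apply_nonneg α hP) fun i j =>
          Real.geom_mean_le_arith_mean2_weighted h0 h1' (hP i j) (hP j i) (by ring)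
    _ ≤ α * ‖P‖ + (1 - α) * ‖P‖ := by
        refine (norm_add_le _ _).trans_eq ?_
        rw [norm_smul, norm_smul, frobenius_norm_transpose, Real.norm_of_nonneg h0,
          Real.norm_of_nonneg h1']
    _ = ‖P‖ := by ring

end Frobenius

variable [DecidableEq ι]

theorem pow_apply_le_pow_apply {A B : Matrix ι ι ℝ} (hA : ∀ i j, 0 ≤ A i j)
    (hAB : ∀ i j, A i j ≤ B i j) (m : ℕ) (i j : ι) : (A ^ m) i j ≤ (B ^ m) i j := by
  induction m generalizing i j with
  | zero => exact le_rfl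
  | succ m ih =>
    rw [pow_succ, pow_succ]
    exact mul_apply_le_mul_apply (pow_apply_nonneg hA m) hA ih hAB i j

theorem geomMeanTranspose_pow_apply_le {A : Matrix ι ι ℝ} (hA : ∀ i j, 0 ≤ A i j) {α : ℝ}
    (h0 : 0 ≤ α) (h1 : α ≤ 1) (m : ℕ) (i j : ι) :
    (geomMeanTranspose α A ^ m) i j ≤ geomMeanTranspose α (A ^ m) i j := by
  have hS := geomMeanTranspose_apply_nonneg α hA
  induction m generalizing i j with
  | zero => exact one_apply_le_geomMeanTranspose_one α i j
  | succ m ih =>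
    calc (geomMeanTranspose α A ^ (m + 1)) i j
        ≤ (geomMeanTranspose α (A ^ m) * geomMeanTranspose α A) i j := by
          rw [pow_succ]
          exact mul_apply_le_mul_apply (pow_apply_nonneg hS m) hS ih (fun _ _ => le_rfl) i j
      _ ≤ geomMeanTranspose α (A ^ (m + 1)) i j := by
          rw [pow_succ]
          exact geomMeanTranspose_mul_apply_le (pow_apply_nonneg hA m) hA
            (Commute.self_pow A m).symm h0 h1 i j

end Matrix

open Matrix

section SpectralRadius

attribute [local instance] frobeniusSeminormedAddCommGroup frobeniusNormedAddCommGroup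
  frobeniusNormedSpace frobeniusNormedRing frobeniusNormedAlgebra

variable {n : ℕ}

theorem Matrix.map_algebraMap_pow (B : Matrix (Fin n) (Fin n) ℝ) (k : ℕ) :
    (B ^ k).map (algebraMap ℝ ℂ) = B.map (algebraMap ℝ ℂ) ^ k :=
  map_pow (algebraMap ℝ ℂ).mapMatrix B k

theorem specRad_pow (B : Matrix (Fin n) (Fin n) ℝ) {k : ℕ} (hk : k ≠ 0) :
    specRad (B ^ k) = specRad B ^ k := by
  rw [specRad, map_algebraMap_pow]
  exact spectrum.spectralRadius_pow _ hk

theorem specRad_le_of_forall_norm_pow_le {B C : Matrix (Fin n) (Fin n) ℝ}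
    (h : ∀ m : ℕ, ‖B ^ m‖ ≤ ‖C ^ m‖) : specRad B ≤ specRad C :=
  spectrum.spectralRadius_le_of_forall_norm_pow_le fun m => by
    have hnorm (M : Matrix (Fin n) (Fin n) ℝ) : ‖M.map (algebraMap ℝ ℂ)‖ = ‖M‖ :=
      frobenius_norm_map_eq M _ (norm_algebraMap' ℂ)
    rw [← map_algebraMap_pow, ← map_algebraMap_pow, hnorm, hnorm]
    exact h m

theorem specRad_le_of_apply_le {B C : Matrix (Fin n) (Fin n) ℝ} (hB : ∀ i j, 0 ≤ B i j)
    (hBC : ∀ i j, B i j ≤ C i j) : specRad B ≤ specRad C :=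
  specRad_le_of_forall_norm_pow_le fun m =>
    frobenius_norm_le_of_apply_le (pow_apply_nonneg hB m) (pow_apply_le_pow_apply hB hBC m)

variable {A : Matrix (Fin n) (Fin n) ℝ} (hA : ∀ i j, 0 ≤ A i j) {α : ℝ} (h0 : 0 ≤ α) (h1 : α ≤ 1)
include hA h0 h1

theorem specRad_geomMeanTranspose_le : specRad (geomMeanTranspose α A) ≤ specRad A :=
  specRad_le_of_forall_norm_pow_le fun m =>
    (frobenius_norm_le_of_apply_le (pow_apply_nonneg (geomMeanTranspose_apply_nonneg α hA) m)
      (geomMeanTranspose_pow_apply_le hA h0 h1 m)).trans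
      (frobenius_norm_geomMeanTranspose_le (pow_apply_nonneg hA m) h0 h1)

theorem sq_specRad_geomMeanTranspose_le :
    specRad (geomMeanTranspose α A) ^ 2 ≤ specRad (geomMeanTranspose α (A ^ 2)) := by
  rw [← specRad_pow _ two_ne_zero]
  exact specRad_le_of_apply_le (pow_apply_nonneg (geomMeanTranspose_apply_nonneg α hA) 2)
    (geomMeanTranspose_pow_apply_le hA h0 h1 2)

end SpectralRadius

theorem Real.two_rpow_neg_natCast (j : ℕ) : (2 : ℝ) ^ (-(j : ℝ)) = ((2 ^ j : ℕ) : ℝ)⁻¹ := by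
  rw [Real.rpow_neg zero_le_two, Real.rpow_natCast, Nat.cast_pow, Nat.cast_ofNat]

theorem ENNReal.rpow_inv_natCast_le_of_sq_le {x y : ℝ≥0∞} {k : ℕ} (hk : k ≠ 0) (h : x ^ 2 ≤ y) :
    x ^ (k⁻¹ : ℝ) ≤ y ^ ((2 * k : ℕ)⁻¹ : ℝ) := by
  rw [ENNReal.le_rpow_inv_iff (by positivity), ENNReal.rpow_natCast, mul_comm, pow_mul,
    ENNReal.rpow_inv_natCast_pow hk]
  exact h

theorem stmt13 {n : ℕ} (K : Matrix (Fin n) (Fin n) ℝ) (hK : ∀ i j, 0 ≤ K i j)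
    (α : ℝ) (hα : α ∈ Set.Icc (0:ℝ) 1)
    (ρ : ℕ → ℝ≥0∞)
    (hρ : ∀ j, ρ j =
      (specRad (Matrix.of fun i k => ((K ^ (2 ^ j)) i k) ^ α * ((K ^ (2 ^ j)) k i) ^ (1 - α))) ^
        ((2:ℝ) ^ (-(j:ℝ)))) :
    (ρ 0 = specRad (Matrix.of fun i k => (K i k) ^ α * (K k i) ^ (1 - α))) ∧
      (∀ j, ρ j ≤ ρ (j + 1)) ∧ (∀ j, ρ j ≤ specRad K) := by
  obtain ⟨h0, h1⟩ := hα
  have hρ' (j : ℕ) : ρ j = specRad (geomMeanTranspose α (K ^ 2 ^ j)) ^ ((2 ^ j : ℕ)⁻¹ : ℝ) := by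
    rw [hρ j, Real.two_rpow_neg_natCast]; rfl
  refine ⟨by simp [hρ', geomMeanTranspose], fun j => ?_, fun j => ?_⟩
  · rw [hρ' j, hρ' (j + 1), pow_succ' 2 j, pow_mul' K]
    exact ENNReal.rpow_inv_natCast_le_of_sq_le (by positivity) <|
      sq_specRad_geomMeanTranspose_le (pow_apply_nonneg hK _) h0 h1
  · rw [hρ' j, ENNReal.rpow_inv_le_iff (by positivity), ENNReal.rpow_natCast,
      ← specRad_pow K (by positivity)]
    exact specRad_geomMeanTranspose_le (pow_apply_nonneg hK _) h0 h1
end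

section
/- Let A and B be nonnegative n×n matrices and α ≥ 1/2. Then ‖A^(α) ∘ B^(α)‖ ≤ r((AᵀB)^(α) ∘ (BᵀA)^(α))^{1/2} ≤ r((AᵀB)^(α) ∘ (AᵀB)^(α))^{1/2} ≤ r(AᵀB)^α, where ‖·‖ is the operator norm on ℓ², r the spectral radius, ∘ the Hadamard product, and X^(α) the entrywise α-power. -/
open scoped ENNReal
open Finset Matrix
/-!
Every inequality comes from comparing Frobenius norms of matrix powers and passing to the limit
in Gelfand's formula `r(M) = lim ‖M ^ k‖ ^ (1 / k)`.

For `C = A^(α) ∘ B^(α)`, the C*-identity gives `‖C‖² = ‖CᵀC‖ ≤ r(CᵀC)` since `CᵀC` is symmetric,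
and `CᵀC ≤ (AᵀB)^(α) ∘ (BᵀA)^(α)` entrywise by Cauchy–Schwarz and the superadditivity of
`t ↦ t ^ (2α)`, valid because `2α ≥ 1`; `r` is monotone on nonnegative matrices.
An induction with Cauchy–Schwarz gives `((X ∘ Y) ^ k)ᵢⱼ² ≤ ((X ∘ X) ^ k)ᵢⱼ ((Y ∘ Y) ^ k)ᵢⱼ`, so for
`Y = Xᵀ` the Frobenius norms satisfy `‖(X ∘ Xᵀ) ^ k‖ ≤ ‖(X ∘ X) ^ k‖`. Finally, for `p ≥ 1`,
superadditivity of `t ↦ t ^ p` gives `(M^(p)) ^ k ≤ (M ^ k)^(p)` entrywise, hence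
`r(M^(p)) ≤ r(M) ^ p`; take `p = 2α`.
-/

open scoped Topology
open Filter

theorem Real.sum_rpow_le_rpow_sum {ι : Type*} (s : Finset ι) {f : ι → ℝ}
    (hf : ∀ i ∈ s, 0 ≤ f i) {p : ℝ} (hp : 1 ≤ p) :
    ∑ i ∈ s, f i ^ p ≤ (∑ i ∈ s, f i) ^ p := by
  induction s using Finset.cons_induction with
  | empty => simp [Real.zero_rpow (by positivity : p ≠ 0)]
  | cons a s _ ih =>
    rw [sum_cons, sum_cons]
    have hs : ∀ i ∈ s, 0 ≤ f i := fun i hi => hf i (mem_cons_of_mem hi)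
    calc f a ^ p + ∑ i ∈ s, f i ^ p ≤ f a ^ p + (∑ i ∈ s, f i) ^ p := by gcongr; exact ih hs
      _ ≤ (f a + ∑ i ∈ s, f i) ^ p :=
        Real.add_rpow_le_rpow_add (hf a (mem_cons_self a s)) (sum_nonneg hs) hp

theorem Real.sum_rpow_mul_rpow_le {ι : Type*} (s : Finset ι) {f g : ι → ℝ}
    (hf : ∀ i ∈ s, 0 ≤ f i) (hg : ∀ i ∈ s, 0 ≤ g i) {α : ℝ} (hα : 1 / 2 ≤ α) :
    ∑ i ∈ s, f i ^ α * g i ^ α ≤ (∑ i ∈ s, f i) ^ α * (∑ i ∈ s, g i) ^ α := by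
  have h2α : 1 ≤ 2 * α := by linarith
  have sq_rpow : ∀ x : ℝ, 0 ≤ x → (x ^ α) ^ 2 = x ^ (2 * α) := fun x hx => by
    rw [← Real.rpow_natCast, ← Real.rpow_mul hx, Nat.cast_ofNat, mul_comm]
  refine (pow_le_pow_iff_left₀
    (sum_nonneg fun i hi =>
      mul_nonneg (Real.rpow_nonneg (hf i hi) _) (Real.rpow_nonneg (hg i hi) _))
    (mul_nonneg (Real.rpow_nonneg (sum_nonneg hf) _) (Real.rpow_nonneg (sum_nonneg hg) _))
    two_ne_zero).1 ?_
  calc (∑ i ∈ s, f i ^ α * g i ^ α) ^ 2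
      ≤ (∑ i ∈ s, (f i ^ α) ^ 2) * ∑ i ∈ s, (g i ^ α) ^ 2 := sum_mul_sq_le_sq_mul_sq s _ _
    _ = (∑ i ∈ s, f i ^ (2 * α)) * ∑ i ∈ s, g i ^ (2 * α) := by
      rw [sum_congr rfl fun i hi => sq_rpow _ (hf i hi),
        sum_congr rfl fun i hi => sq_rpow _ (hg i hi)]
    _ ≤ (∑ i ∈ s, f i) ^ (2 * α) * (∑ i ∈ s, g i) ^ (2 * α) :=
      mul_le_mul (Real.sum_rpow_le_rpow_sum s hf h2α) (Real.sum_rpow_le_rpow_sum s hg h2α)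
        (sum_nonneg fun i hi => Real.rpow_nonneg (hg i hi) _)
        (Real.rpow_nonneg (sum_nonneg hf) _)
    _ = ((∑ i ∈ s, f i) ^ α * (∑ i ∈ s, g i) ^ α) ^ 2 := by
      rw [mul_pow, sq_rpow _ (sum_nonneg hf), sq_rpow _ (sum_nonneg hg)]

section Entrywise

variable {ι : Type*} [Fintype ι] [DecidableEq ι]

theorem Matrix.mul_apply_nonneg {l m n : Type*} [Fintype m] {M : Matrix l m ℝ} {N : Matrix m n ℝ}
    (hM : ∀ i j, 0 ≤ M i j) (hN : ∀ i j, 0 ≤ N i j) (i : l) (j : n) : 0 ≤ (M * N) i j :=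
  sum_nonneg fun k _ => mul_nonneg (hM i k) (hN k j)

theorem Matrix.pow_apply_le_pow_apply_s18 {M N : Matrix ι ι ℝ} (hM : ∀ i j, 0 ≤ M i j)
    (hMN : ∀ i j, M i j ≤ N i j) (k : ℕ) (i j : ι) : (M ^ k) i j ≤ (N ^ k) i j := by
  induction k generalizing i j with
  | zero => rfl
  | succ k ih =>
    simp only [pow_succ, mul_apply]
    exact sum_le_sum fun l _ =>
      mul_le_mul (ih i l) (hMN l j) (hM l j) ((pow_apply_nonneg hM k i l).trans (ih i l))

theorem Matrix.pow_map_rpow_apply_le {M : Matrix ι ι ℝ} (hM : ∀ i j, 0 ≤ M i j) {p : ℝ}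
    (hp : 1 ≤ p) (k : ℕ) (i j : ι) : (M.map (· ^ p) ^ k) i j ≤ (M ^ k) i j ^ p := by
  induction k generalizing i j with
  | zero =>
    simp only [pow_zero, one_apply]
    split_ifs <;> simp [Real.zero_rpow (by positivity : p ≠ 0)]
  | succ k ih =>
    simp only [pow_succ, mul_apply]
    calc ∑ l, (M.map (· ^ p) ^ k) i l * M.map (· ^ p) l j
        ≤ ∑ l, ((M ^ k) i l * M l j) ^ p := by
          gcongr with l
          rw [Real.mul_rpow (pow_apply_nonneg hM k i l) (hM l j)]
          exact mul_le_mul_of_nonneg_right (ih i l) (Real.rpow_nonneg (hM l j) p)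
      _ ≤ (∑ l, (M ^ k) i l * M l j) ^ p :=
        Real.sum_rpow_le_rpow_sum _ (fun l _ => mul_nonneg (pow_apply_nonneg hM k i l) (hM l j)) hp

theorem Matrix.pow_hadamard_apply_sq_le (X Y : Matrix ι ι ℝ) (k : ℕ) (i j : ι) :
    ((X ⊙ Y) ^ k) i j ^ 2 ≤ ((X ⊙ X) ^ k) i j * ((Y ⊙ Y) ^ k) i j := by
  have hXX : ∀ i j, 0 ≤ (X ⊙ X) i j := fun i j => mul_self_nonneg (X i j)
  have hYY : ∀ i j, 0 ≤ (Y ⊙ Y) i j := fun i j => mul_self_nonneg (Y i j)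
  induction k generalizing i j with
  | zero => exact (sq _).le
  | succ k ih =>
    simp only [pow_succ, mul_apply]
    refine sum_sq_le_sum_mul_sum_of_sq_le_mul _
      (fun l _ => mul_nonneg (pow_apply_nonneg hXX k i l) (hXX l j))
      (fun l _ => mul_nonneg (pow_apply_nonneg hYY k i l) (hYY l j)) fun l _ => ?_
    calc (((X ⊙ Y) ^ k) i l * (X ⊙ Y) l j) ^ 2
        = ((X ⊙ Y) ^ k) i l ^ 2 * ((X ⊙ X) l j * (Y ⊙ Y) l j) := by
          simp only [hadamard_apply]; ring
      _ ≤ ((X ⊙ X) ^ k) i l * ((Y ⊙ Y) ^ k) i l * ((X ⊙ X) l j * (Y ⊙ Y) l j) :=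
          mul_le_mul_of_nonneg_right (ih i l) (mul_nonneg (hXX l j) (hYY l j))
      _ = _ := by ring

theorem Matrix.transpose_mul_self_hadamard_rpow_apply_le {m n : Type*} [Fintype m]
    {A B : Matrix m n ℝ} (hA : ∀ i j, 0 ≤ A i j) (hB : ∀ i j, 0 ≤ B i j) {α : ℝ}
    (hα : 1 / 2 ≤ α) (i j : n) :
    ((A.map (· ^ α) ⊙ B.map (· ^ α))ᵀ * (A.map (· ^ α) ⊙ B.map (· ^ α))) i j ≤
      ((Aᵀ * B).map (· ^ α) ⊙ (Bᵀ * A).map (· ^ α)) i j := by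
  have regroup : ∀ k, A k i ^ α * B k i ^ α * (A k j ^ α * B k j ^ α) =
      (A k i * B k j) ^ α * (B k i * A k j) ^ α := fun k => by
    rw [Real.mul_rpow (hA k i) (hB k j), Real.mul_rpow (hB k i) (hA k j)]
    ring
  simp only [mul_apply, transpose_apply, hadamard_apply, map_apply, regroup]
  exact Real.sum_rpow_mul_rpow_le _ (fun k _ => mul_nonneg (hA k i) (hB k j))
    (fun k _ => mul_nonneg (hB k i) (hA k j)) hα

end Entrywise

section Frobenius

attribute [local instance] Matrix.frobeniusNormedAddCommGroup Matrix.frobeniusNormedRing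
  Matrix.frobeniusNormedAlgebra

theorem Matrix.frobenius_norm_eq_sqrt_sum_sq {m n : Type*} [Fintype m] [Fintype n]
    (M : Matrix m n ℝ) : ‖M‖ = √(∑ p : m × n, M p.1 p.2 ^ 2) := by
  rw [frobenius_norm_def, Real.sqrt_eq_rpow, Fintype.sum_prod_type' fun i j => M i j ^ 2]
  simp only [Real.norm_eq_abs, Real.rpow_two, sq_abs]

theorem Matrix.frobenius_norm_sq_le_mul {m n : Type*} [Fintype m] [Fintype n]
    {M P Q : Matrix m n ℝ} (h : ∀ i j, M i j ^ 2 ≤ P i j * Q i j) : ‖M‖ ^ 2 ≤ ‖P‖ * ‖Q‖ := by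
  rw [frobenius_norm_eq_sqrt_sum_sq, frobenius_norm_eq_sqrt_sum_sq,
    frobenius_norm_eq_sqrt_sum_sq, Real.sq_sqrt (by positivity)]
  exact (sum_le_sum fun p _ => h p.1 p.2).trans (Real.sum_mul_le_sqrt_mul_sqrt _ _ _)

theorem Matrix.frobenius_norm_le_rpow {m n : Type*} [Fintype m] [Fintype n]
    {M N : Matrix m n ℝ} {p : ℝ} (hp : 1 ≤ p) (h : ∀ i j, |M i j| ≤ |N i j| ^ p) :
    ‖M‖ ≤ ‖N‖ ^ p := by
  have hp0 : 0 ≤ p := by linarith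
  rw [frobenius_norm_eq_sqrt_sum_sq, frobenius_norm_eq_sqrt_sum_sq, Real.sqrt_eq_rpow,
    Real.sqrt_eq_rpow, ← Real.rpow_mul (by positivity), mul_comm, Real.rpow_mul (by positivity)]
  gcongr
  calc ∑ q : m × n, M q.1 q.2 ^ 2 ≤ ∑ q : m × n, (N q.1 q.2 ^ 2) ^ p := by
        gcongr with q
        rw [← sq_abs, ← sq_abs (N _ _), ← Real.rpow_natCast, ← Real.rpow_natCast,
          ← Real.rpow_mul (abs_nonneg _), mul_comm, Real.rpow_mul (abs_nonneg _)]
        gcongr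
        exact h q.1 q.2
    _ ≤ (∑ q : m × n, N q.1 q.2 ^ 2) ^ p :=
        Real.sum_rpow_le_rpow_sum _ (fun q _ => sq_nonneg _) hp

theorem Matrix.nnnorm_toEuclideanCLM_le_frobenius_nnnorm {n 𝕜 : Type*} [Fintype n]
    [DecidableEq n] [RCLike 𝕜] (M : Matrix n n 𝕜) : ‖toEuclideanCLM (𝕜 := 𝕜) M‖₊ ≤ ‖M‖₊ := by
  refine ContinuousLinearMap.opNorm_le_bound _ (norm_nonneg _) fun x => ?_
  calc ‖toEuclideanCLM (𝕜 := 𝕜) M x‖ = ‖M * replicateCol Unit (WithLp.ofLp x)‖ := by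
        rw [← replicateCol_mulVec, frobenius_norm_replicateCol, ← ofLp_toEuclideanCLM,
          WithLp.toLp_ofLp]
    _ ≤ ‖M‖ * ‖replicateCol Unit (WithLp.ofLp x)‖ := frobenius_norm_mul _ _
    _ = ‖M‖ * ‖x‖ := by rw [frobenius_norm_replicateCol, WithLp.toLp_ofLp]

variable {n : ℕ}

theorem pow_nnnorm_pow_one_div_tendsto_nhds_specRad (M : Matrix (Fin n) (Fin n) ℝ) :
    Tendsto (fun k : ℕ => (‖M ^ k‖₊ : ℝ≥0∞) ^ (1 / k : ℝ)) atTop (𝓝 (specRad M)) := by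
  have hmap : ∀ k : ℕ, ‖M.map (algebraMap ℝ ℂ) ^ k‖₊ = ‖M ^ k‖₊ := fun k => by
    rw [← RingHom.mapMatrix_apply, ← map_pow, RingHom.mapMatrix_apply]
    exact frobenius_nnnorm_map_eq _ _ fun a => by simp
  simpa only [hmap, specRad] using
    spectrum.pow_nnnorm_pow_one_div_tendsto_nhds_spectralRadius (M.map (algebraMap ℝ ℂ))

theorem specRad_le_rpow_of_nnnorm_pow_le {M N : Matrix (Fin n) (Fin n) ℝ} {p : ℝ}
    (h : ∀ k : ℕ, (‖M ^ k‖₊ : ℝ≥0∞) ≤ (‖N ^ k‖₊ : ℝ≥0∞) ^ p) : specRad M ≤ specRad N ^ p := by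
  have hN := ((ENNReal.continuous_rpow_const (y := p)).tendsto _).comp
    (pow_nnnorm_pow_one_div_tendsto_nhds_specRad N)
  refine le_of_tendsto_of_tendsto' (pow_nnnorm_pow_one_div_tendsto_nhds_specRad M) hN
    fun k => ?_
  rw [Function.comp_apply, ← ENNReal.rpow_mul, mul_comm, ENNReal.rpow_mul]
  exact ENNReal.rpow_le_rpow (h k) (by positivity)

theorem specRad_le_of_norm_pow_le {M N : Matrix (Fin n) (Fin n) ℝ}
    (h : ∀ k : ℕ, ‖M ^ k‖ ≤ ‖N ^ k‖) : specRad M ≤ specRad N := by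
  simpa using specRad_le_rpow_of_nnnorm_pow_le (p := 1) fun k => by
    simpa using ENNReal.coe_le_coe.mpr (show ‖M ^ k‖₊ ≤ ‖N ^ k‖₊ from h k)

theorem specRad_mono {M N : Matrix (Fin n) (Fin n) ℝ} (hM : ∀ i j, 0 ≤ M i j)
    (hMN : ∀ i j, M i j ≤ N i j) : specRad M ≤ specRad N :=
  specRad_le_of_norm_pow_le fun k => by
    have hMk := pow_apply_nonneg hM k
    have hle := pow_apply_le_pow_apply_s18 hM hMN k
    simpa using frobenius_norm_le_rpow le_rfl fun i j => by
      rw [Real.rpow_one, abs_of_nonneg (hMk i j), abs_of_nonneg ((hMk i j).trans (hle i j))]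
      exact hle i j

theorem specRad_map_rpow_le {M : Matrix (Fin n) (Fin n) ℝ} (hM : ∀ i j, 0 ≤ M i j) {p : ℝ}
    (hp : 1 ≤ p) : specRad (M.map (· ^ p)) ≤ specRad M ^ p := by
  refine specRad_le_rpow_of_nnnorm_pow_le fun k => ?_
  have hMp : ∀ i j, 0 ≤ M.map (· ^ p) i j := fun i j => Real.rpow_nonneg (hM i j) p
  have h : ‖M.map (· ^ p) ^ k‖₊ ≤ ‖M ^ k‖₊ ^ p := by
    refine frobenius_norm_le_rpow hp fun i j => ?_
    rw [abs_of_nonneg (pow_apply_nonneg hMp k i j), abs_of_nonneg (pow_apply_nonneg hM k i j)]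
    exact pow_map_rpow_apply_le hM hp k i j
  rw [← ENNReal.coe_rpow_of_nonneg _ (by linarith)]
  exact ENNReal.coe_le_coe.mpr h

theorem specRad_hadamard_transpose_le (X : Matrix (Fin n) (Fin n) ℝ) :
    specRad (X ⊙ Xᵀ) ≤ specRad (X ⊙ X) := by
  refine specRad_le_of_norm_pow_le fun k => ?_
  have h := frobenius_norm_sq_le_mul (pow_hadamard_apply_sq_le X Xᵀ k)
  rw [← transpose_hadamard, ← transpose_pow, frobenius_norm_transpose, ← sq] at h
  exact (pow_le_pow_iff_left₀ (norm_nonneg _) (norm_nonneg _) two_ne_zero).1 h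

theorem nnnorm_toEuclideanCLM_le_specRad {S : Matrix (Fin n) (Fin n) ℝ} (hS : Sᵀ = S) :
    (‖toEuclideanCLM (𝕜 := ℝ) S‖₊ : ℝ≥0∞) ≤ specRad S := by
  have hsa : IsSelfAdjoint (toEuclideanCLM (𝕜 := ℝ) S) := by
    rw [IsSelfAdjoint, ← map_star, star_eq_conjTranspose, conjTranspose_eq_transpose_of_trivial,
      hS]
  refine ge_of_tendsto ((pow_nnnorm_pow_one_div_tendsto_nhds_specRad S).comp
    (tendsto_pow_atTop_atTop_of_one_lt one_lt_two)) (Eventually.of_forall fun m => ?_)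
  have h : ‖toEuclideanCLM (𝕜 := ℝ) S‖₊ ^ 2 ^ m ≤ ‖S ^ 2 ^ m‖₊ := by
    rw [← hsa.nnnorm_pow_two_pow, ← map_pow]
    exact nnnorm_toEuclideanCLM_le_frobenius_nnnorm _
  rw [Function.comp_apply, one_div, ENNReal.le_rpow_inv_iff (by positivity), ENNReal.rpow_natCast]
  exact_mod_cast h

theorem nnnorm_toEuclideanCLM_le_specRad_rpow_half {C D : Matrix (Fin n) (Fin n) ℝ}
    (hC : ∀ i j, 0 ≤ C i j) (hCD : ∀ i j, (Cᵀ * C) i j ≤ D i j) :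
    (‖toEuclideanCLM (𝕜 := ℝ) C‖₊ : ℝ≥0∞) ≤ specRad D ^ (1 / 2 : ℝ) := by
  have hCtC : ‖toEuclideanCLM (𝕜 := ℝ) C‖₊ * ‖toEuclideanCLM (𝕜 := ℝ) C‖₊ =
      ‖toEuclideanCLM (𝕜 := ℝ) (Cᵀ * C)‖₊ := by
    rw [map_mul, ← conjTranspose_eq_transpose_of_trivial, ← star_eq_conjTranspose, map_star]
    exact CStarRing.nnnorm_star_mul_self.symm
  rw [one_div, ENNReal.le_rpow_inv_iff two_pos, ENNReal.rpow_two, sq, ← ENNReal.coe_mul, hCtC]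
  calc (‖toEuclideanCLM (𝕜 := ℝ) (Cᵀ * C)‖₊ : ℝ≥0∞) ≤ specRad (Cᵀ * C) :=
        nnnorm_toEuclideanCLM_le_specRad (by rw [transpose_mul, transpose_transpose])
    _ ≤ specRad D := specRad_mono (mul_apply_nonneg (fun i j => hC j i) hC) hCD

end Frobenius

theorem stmt18 {n : ℕ} (A B : Matrix (Fin n) (Fin n) ℝ)
    (hA : ∀ i j, 0 ≤ A i j) (hB : ∀ i j, 0 ≤ B i j)
    (α : ℝ) (hα : (1:ℝ)/2 ≤ α) :
    (‖Matrix.toEuclideanCLM (𝕜 := ℝ) (Matrix.of fun i j => (A i j) ^ α * (B i j) ^ α)‖₊ : ℝ≥0∞) ≤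
        (specRad (Matrix.of fun i j => ((Aᵀ * B) i j) ^ α * ((Bᵀ * A) i j) ^ α)) ^ ((1:ℝ)/2) ∧
      (specRad (Matrix.of fun i j => ((Aᵀ * B) i j) ^ α * ((Bᵀ * A) i j) ^ α)) ^ ((1:ℝ)/2) ≤
        (specRad (Matrix.of fun i j => ((Aᵀ * B) i j) ^ α * ((Aᵀ * B) i j) ^ α)) ^ ((1:ℝ)/2) ∧
      (specRad (Matrix.of fun i j => ((Aᵀ * B) i j) ^ α * ((Aᵀ * B) i j) ^ α)) ^ ((1:ℝ)/2) ≤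
        specRad (Aᵀ * B) ^ α := by
  have hα0 : 0 ≤ α := by linarith
  have hAB : ∀ i j, 0 ≤ (Aᵀ * B) i j := mul_apply_nonneg (fun i j => hA j i) hB
  have hBA : Bᵀ * A = (Aᵀ * B)ᵀ := by rw [transpose_mul, transpose_transpose]
  have hsq : (Matrix.of fun i j => ((Aᵀ * B) i j) ^ α * ((Aᵀ * B) i j) ^ α) =
      (Aᵀ * B).map (· ^ (2 * α)) := by
    ext i j
    rw [of_apply, map_apply, two_mul, Real.rpow_add_of_nonneg (hAB i j) hα0 hα0]
  refine ⟨?_, ?_, ?_⟩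
  · exact nnnorm_toEuclideanCLM_le_specRad_rpow_half
      (fun i j => mul_nonneg (Real.rpow_nonneg (hA i j) α) (Real.rpow_nonneg (hB i j) α))
      (transpose_mul_self_hadamard_rpow_apply_le hA hB hα)
  · rw [hBA]
    exact ENNReal.rpow_le_rpow (specRad_hadamard_transpose_le ((Aᵀ * B).map (· ^ α)))
      (by norm_num)
  · rw [hsq]
    calc specRad ((Aᵀ * B).map (· ^ (2 * α))) ^ (1 / 2 : ℝ)
        ≤ (specRad (Aᵀ * B) ^ (2 * α)) ^ (1 / 2 : ℝ) := by
          gcongr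
          exact specRad_map_rpow_le hAB (by linarith)
      _ = specRad (Aᵀ * B) ^ α := by
          rw [← ENNReal.rpow_mul, show 2 * α * (1 / 2 : ℝ) = α by ring]
end
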